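/- Chain rule for a Boolean-to-integer function followed by a real-valued function of an integer variable: let f : B → ℤ and g : ℤ → ℝ, where g'(n) = g(n+1) - g(n) is the discrete derivative, and let x ∈ B. If |f'(x)| ≤ 1 and g'(f(x)) = g'(f(x) - 1), then (g ∘ f)'(x) = xnor(g'(f(x)), f'(x)), where xnor is the mixed-type XNOR of real numbers, i.e., multiplication. -/

import Mathlib

/-- The three-valued logic `M = {T, 0, F}`. -/
inductive Tri where
  | T : Tri
  | Z : Tri
  | F : Tri
deriving DecidableEq

/-- Mixed-type XNOR of `a ∈ M` with an integer `z`: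
`z` if `a = T`, `0` if `a = 0`, `-z` if `a = F`. -/
def mxnorZ : Tri → ℤ → ℤ
  | .T, z => z
  | .Z, _ => 0
  | .F, z => -z

/-- Mixed-type XNOR of `a ∈ M` with a real number `z`:
`z` if `a = T`, `0` if `a = 0`, `-z` if `a = F`. -/
def mxnorR : Tri → ℝ → ℝ
  | .T, z => z
  | .Z, _ => 0
  | .F, z => -z

/-- Variation `δ(x → y)` of a Boolean `x` to `y`, with order `F < T`
(`false < true`): `T` if `y > x`, `0` if `y = x`, `F` if `y < x`. -/
def bvar (x y : Bool) : Tri :=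
  if x = y then .Z else if y then .T else .F

/-- Variation of `f : B → ℤ`: `f'(x) = xnor(δ(x → ¬x), f(¬x) - f(x))`. -/
def varZ (f : Bool → ℤ) (x : Bool) : ℤ :=
  mxnorZ (bvar x (!x)) (f (!x) - f x)

/-- Variation of `f : B → ℝ`: `f'(x) = xnor(δ(x → ¬x), f(¬x) - f(x))`. -/
def varR (f : Bool → ℝ) (x : Bool) : ℝ :=
  mxnorR (bvar x (!x)) (f (!x) - f x)

/-- Discrete derivative of `g : ℤ → ℝ`: `g'(n) = g(n+1) - g(n)`. -/
def dderiv (g : ℤ → ℝ) (n : ℤ) : ℝ :=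
  g (n + 1) - g n
/-! Whatever `x` is, both variations equal `f T - f F`, so the claim reduces to a statement about
`g` alone: a step of `-1`, `0` or `1` away from `n = f x` changes `g` by `g'(n)` times the step;
the downward step changes it by `-g'(n - 1)`, which is where `g'(n - 1) = g'(n)` enters. -/

theorem varZ_eq_sub (f : Bool → ℤ) (x : Bool) : varZ f x = f true - f false := by
  cases x <;> simp [varZ, bvar, mxnorZ]

theorem varR_eq_sub (f : Bool → ℝ) (x : Bool) : varR f x = f true - f false := by
  cases x <;> simp [varR, bvar, mxnorR]

theorem sub_eq_dderiv_mul_of_abs_le_one (g : ℤ → ℝ) {m n : ℤ} (hmn : |m - n| ≤ 1)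
    (hg : dderiv g n = dderiv g (n - 1)) : g m - g n = dderiv g n * ((m - n : ℤ) : ℝ) := by
  unfold dderiv at *
  obtain rfl | rfl | rfl : m = n - 1 ∨ m = n ∨ m = n + 1 := by
    rcases abs_le.mp hmn with ⟨hl, hr⟩
    omega
  · simp only [sub_sub_cancel_left, sub_add_cancel] at *
    push_cast
    linarith
  · simp
  · simp

theorem varR_comp_discrete (f : Bool → ℤ) (g : ℤ → ℝ) (x : Bool)
    (h1 : |varZ f x| ≤ 1)
    (h2 : dderiv g (f x) = dderiv g (f x - 1)) :
    varR (fun t => g (f t)) x = dderiv g (f x) * (varZ f x : ℝ) := by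
  rw [varZ_eq_sub] at h1 ⊢
  rw [varR_eq_sub]
  cases x
  · exact sub_eq_dderiv_mul_of_abs_le_one g h1 h2
  · rw [abs_sub_comm] at h1
    have step := sub_eq_dderiv_mul_of_abs_le_one g h1 h2
    push_cast at step ⊢
    linear_combination -step
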